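/- arXiv:2507.09007 — 6 statements merged into one kernel-verified Lean document; each statement's English description precedes it below -/
import Mathlib

section
/- Credal set characterization via level sets: a probability measure Q on T belongs to the credal set of a possibility measure Π with contour π (Π(H) = sup_{θ∈H} π(θ)) if and only if Q{θ : π(θ) > α} ≥ 1 − α for all α ∈ [0,1] — assuming the level sets {π > α} are measurable. (The forward direction: Q ∈ C(Π) implies Q{π > α} ≥ 1 − α, follows since Q{π ≤ α} ≤ Π{π ≤ α} ≤ α whenever {π ≤ α} is nonempty.) -/
open MeasureTheory Set

/-- Credal set characterization via level sets: a probability measure `Q`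
belongs to the credal set of the possibility measure with contour `π`
(`Π(H) = sup_{θ ∈ H} π(θ)`) if and only if `Q{π > α} ≥ 1 − α` for all
`α ∈ [0,1]`. -/
theorem stmt8 {T : Type*} [MeasurableSpace T] (π : T → ℝ) (hπ : Measurable π)
    (h01 : ∀ θ, π θ ∈ Set.Icc (0 : ℝ) 1) (hnorm : sSup (Set.range π) = 1)
    (Q : Measure T) [IsProbabilityMeasure Q] :
    (∀ H : Set T, MeasurableSet H → Q H ≤ ENNReal.ofReal (sSup (π '' H)))
    ↔ (∀ α : ℝ, α ∈ Set.Icc (0 : ℝ) 1 →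
        ENNReal.ofReal (1 - α) ≤ Q {θ | α < π θ}) := by
  constructor
  · intro h α hα
    obtain ⟨hα0, hα1⟩ := hα
    set A : Set T := {θ | π θ ≤ α} with hA
    have hAm : MeasurableSet A := measurableSet_le hπ measurable_const
    have hs : sSup (π '' A) ≤ α := by
      rcases (π '' A).eq_empty_or_nonempty with he | hne
      · rw [he]; simpa [Real.sSup_empty] using hα0
      · exact csSup_le hne (by rintro x ⟨θ, hθ, rfl⟩; exact hθ)
    have hQA : Q A ≤ ENNReal.ofReal α :=
      (h A hAm).trans (ENNReal.ofReal_le_ofReal hs)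
    have hc : {θ | α < π θ} = Aᶜ := by ext θ; simp [hA, not_le]
    rw [hc, prob_compl_eq_one_sub hAm]
    calc ENNReal.ofReal (1 - α) = 1 - ENNReal.ofReal α := by
          rw [ENNReal.ofReal_sub _ hα0, ENNReal.ofReal_one]
      _ ≤ 1 - Q A := tsub_le_tsub_left hQA 1
  · intro h H hH
    rcases H.eq_empty_or_nonempty with rfl | ⟨θ0, hθ0⟩
    · simp
    have hbdd : BddAbove (π '' H) := ⟨1, by rintro x ⟨θ, _, rfl⟩; exact (h01 θ).2⟩
    set s := sSup (π '' H) with hsdef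
    have hs0 : 0 ≤ s := le_trans (h01 θ0).1 (le_csSup hbdd ⟨θ0, hθ0, rfl⟩)
    have hs1 : s ≤ 1 :=
      csSup_le ⟨_, θ0, hθ0, rfl⟩ (by rintro x ⟨θ, _, rfl⟩; exact (h01 θ).2)
    have hsub : H ⊆ {θ | π θ ≤ s} := fun θ hθ => le_csSup hbdd ⟨θ, hθ, rfl⟩
    have hBm : MeasurableSet {θ | s < π θ} := measurableSet_lt measurable_const hπ
    have hkey := h s ⟨hs0, hs1⟩
    have hc : {θ | π θ ≤ s} = {θ | s < π θ}ᶜ := by ext θ; simp [not_lt]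
    calc Q H ≤ Q {θ | π θ ≤ s} := measure_mono hsub
      _ = 1 - Q {θ | s < π θ} := by rw [hc, prob_compl_eq_one_sub hBm]
      _ ≤ 1 - ENNReal.ofReal (1 - s) := tsub_le_tsub_left hkey 1
      _ = ENNReal.ofReal s := by
          rw [← ENNReal.ofReal_one, ← ENNReal.ofReal_sub _ (by linarith)]
          norm_num
end

section
/- Profile-based marginalization is strongly valid: with relative profile likelihood R^pr(z, φ) = sup_{θ : g(θ)=φ} R(z, θ) and marginal contour π_z^pr(φ) = sup_{θ : g(θ)=φ} P_θ{R^pr(Z, φ) ≤ R^pr(z, φ)}, one has P_θ{π_Z^pr(g(θ)) ≤ α} ≤ α for every θ ∈ T and α ∈ [0,1]. -/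
open MeasureTheory Set

/-- Profile-based marginalization is strongly valid: with relative profile
likelihood `R^pr(z, φ) = sup_{θ : g(θ)=φ} R(z, θ)` and marginal contour
`π_z^pr(φ) = sup_{θ : g(θ)=φ} P_θ{R^pr(Z, φ) ≤ R^pr(z, φ)}`, one has
`P_θ{π_Z^pr(g(θ)) ≤ α} ≤ α` for every `θ` and `α ∈ [0,1]`. -/
theorem stmt10 {Z T S : Type*} [MeasurableSpace Z] (P : T → Measure Z)
    [∀ θ, IsProbabilityMeasure (P θ)]
    (R : Z → T → ℝ) (g : T → S)
    (Rpr : Z → S → ℝ) (hRpr : ∀ z φ, Rpr z φ = sSup ((fun θ => R z θ) '' (g ⁻¹' {φ})))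
    (πpr : Z → S → ℝ)
    (hπpr : ∀ z φ, πpr z φ =
      sSup ((fun θ => (P θ {w | Rpr w φ ≤ Rpr z φ}).toReal) '' (g ⁻¹' {φ}))) :
    ∀ θ : T, ∀ α : ℝ, α ∈ Set.Icc (0 : ℝ) 1 →
      P θ {z | πpr z (g θ) ≤ α} ≤ ENNReal.ofReal α := by
  intro θ α hα
  obtain ⟨hα0, hα1⟩ := hα
  set φ := g θ with hφ
  set μ := P θ with hμ
  set f : Z → ℝ := fun z => Rpr z φ with hf
  have hfin : ∀ s : Set Z, μ s ≠ ⊤ := fun s => (measure_lt_top μ s).ne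
  -- Step 1: πpr dominates the inner probability at θ
  have key : {z | πpr z φ ≤ α} ⊆ {z | (μ {w | f w ≤ f z}).toReal ≤ α} := by
    intro z hz
    have hmem : (μ {w | f w ≤ f z}).toReal ∈
        ((fun θ' => (P θ' {w | Rpr w φ ≤ Rpr z φ}).toReal) '' (g ⁻¹' {φ})) :=
      ⟨θ, rfl, rfl⟩
    have hbdd : BddAbove ((fun θ' => (P θ' {w | Rpr w φ ≤ Rpr z φ}).toReal) '' (g ⁻¹' {φ})) := by
      refine ⟨1, fun x hx => ?_⟩
      obtain ⟨θ', _, rfl⟩ := hx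
      exact ENNReal.toReal_le_of_le_ofReal zero_le_one (by simpa using prob_le_one)
    have := le_csSup hbdd hmem
    rw [← hπpr] at this
    exact this.trans hz
  refine le_trans (measure_mono key) ?_
  -- Step 2: probability integral transform for arbitrary sets
  set T' : Set ℝ := {t | (μ {w | f w ≤ t}).toReal ≤ α} with hT'
  have hlower : ∀ t ∈ T', ∀ t' ≤ t, t' ∈ T' := by
    intro t ht t' htt'
    have ht2 : (μ {w | f w ≤ t}).toReal ≤ α := ht
    show (μ {w | f w ≤ t'}).toReal ≤ α
    refine le_trans (ENNReal.toReal_mono (hfin _) (measure_mono ?_)) ht2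
    intro w hw
    exact le_trans (show f w ≤ t' from hw) htt'
  have hsub : {z | (μ {w | f w ≤ f z}).toReal ≤ α} = f ⁻¹' T' := rfl
  rw [hsub]
  have hmem_of_le : ∀ t : ℝ, t ∈ T' → μ {w | f w ≤ t} ≤ ENNReal.ofReal α := by
    intro t ht
    rw [← ENNReal.ofReal_toReal (hfin {w | f w ≤ t})]
    exact ENNReal.ofReal_le_ofReal ht
  rcases eq_or_lt_of_le hα1 with h1 | h1
  · -- α = 1 : trivial
    subst h1
    simpa using prob_le_one
  -- α < 1 : T' is bounded above
  have hunion : (⋃ n : ℕ, {z | f z ≤ (n : ℝ)}) = univ := by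
    ext z; simp only [mem_iUnion, mem_univ, iff_true, mem_setOf_eq]
    exact exists_nat_ge (f z)
  have hcont : μ (⋃ n : ℕ, {z | f z ≤ (n : ℝ)}) = ⨆ n : ℕ, μ {z | f z ≤ (n : ℝ)} :=
    Directed.measure_iUnion
      (Monotone.directed_le fun m n hmn z hz =>
        le_trans (show f z ≤ (m:ℝ) from hz) (Nat.cast_le.mpr hmn))
  have hone : (⨆ n : ℕ, μ {z | f z ≤ (n : ℝ)}) = 1 := by
    rw [← hcont, hunion, measure_univ]
  have hlt1 : ENNReal.ofReal α < 1 := by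
    rw [← ENNReal.ofReal_one]
    exact ENNReal.ofReal_lt_ofReal_iff_of_nonneg hα0 |>.mpr h1
  obtain ⟨N, hN⟩ : ∃ n : ℕ, ENNReal.ofReal α < μ {z | f z ≤ (n : ℝ)} := by
    have : ENNReal.ofReal α < ⨆ n : ℕ, μ {z | f z ≤ (n : ℝ)} := hone ▸ hlt1
    exact lt_iSup_iff.mp this
  have hNnot : (N : ℝ) ∉ T' := by
    intro hNT
    exact absurd (hmem_of_le _ hNT) (not_le.mpr hN)
  have hbddT' : BddAbove T' := by
    refine ⟨N, fun t ht => ?_⟩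
    by_contra hlt
    exact hNnot (hlower t ht _ (le_of_not_ge hlt))
  rcases T'.eq_empty_or_nonempty with hE | hNE
  · rw [hE]
    simp
  set c := sSup T' with hc
  by_cases hcT : (μ {w | f w ≤ c}).toReal ≤ α
  · -- c ∈ T'
    have : f ⁻¹' T' ⊆ {w | f w ≤ c} := fun z hz => le_csSup hbddT' hz
    exact (measure_mono this).trans (hmem_of_le c hcT)
  · -- every t < c lies in T'; use countable approximation
    have hltmem : ∀ t < c, t ∈ T' := by
      intro t htc
      obtain ⟨t', ht'T, htt'⟩ := exists_lt_of_lt_csSup hNE htc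
      exact hlower t' ht'T t htt'.le
    have hsub2 : f ⁻¹' T' ⊆ ⋃ n : ℕ, {z | f z ≤ c - 1 / (n + 1)} := by
      intro z hz
      have hzc : f z < c := by
        rcases lt_or_ge (f z) c with h | h
        · exact h
        · exact absurd (hlower _ hz c h) (fun hcT' => hcT hcT')
      obtain ⟨n, hn⟩ := exists_nat_one_div_lt (sub_pos.mpr hzc)
      exact mem_iUnion.mpr ⟨n, show f z ≤ c - 1 / ((n:ℝ) + 1) from by linarith⟩
    refine (measure_mono hsub2).trans ?_
    have hcont2 : μ (⋃ n : ℕ, {z | f z ≤ c - 1 / (n + 1)}) =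
        ⨆ n : ℕ, μ {z | f z ≤ c - 1 / (n + 1)} := by
      refine Directed.measure_iUnion (Monotone.directed_le fun m n hmn z hz =>
        le_trans (show f z ≤ c - 1 / ((m:ℝ) + 1) from hz) ?_)
      have hmn' : (m : ℝ) ≤ n := Nat.cast_le.mpr hmn
      have : (1 : ℝ) / (n + 1) ≤ 1 / (m + 1) := by
        apply one_div_le_one_div_of_le
        · positivity
        · linarith
      linarith
    rw [hcont2]
    refine iSup_le fun n => hmem_of_le _ (hltmem _ ?_)
    have : (0 : ℝ) < 1 / (n + 1) := by positivity
    linarith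
end

section
/- Generalized (model-free) IM validity: let P be an unknown distribution on Z, τ a functional assigning to each P a value τ(P) ∈ T, and ρ : Z × T → ℝ a ranking function. Define π_z(θ) = sup_{P : τ(P) = θ} P{ρ(Z, θ) ≤ ρ(z, θ)}. Then sup_P P{π_Z(τ(P)) ≤ α} ≤ α for all α ∈ [0,1]. -/
open MeasureTheory Set

/-- Generalized (model-free) IM validity: with `τ` a functional on probability
measures and `ρ` a ranking function, the validified contour
`π_z(θ) = sup_{P : τ(P) = θ} P{ρ(Z, θ) ≤ ρ(z, θ)}` satisfies
`P{π_Z(τ(P)) ≤ α} ≤ α` for every probability measure `P` and `α ∈ [0,1]`. -/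
theorem stmt11 {Z T : Type*} [MeasurableSpace Z]
    (τ : Measure Z → T) (ρ : Z → T → ℝ)
    (π : Z → T → ℝ)
    (hπ : ∀ z θ, π z θ =
      sSup {x : ℝ | ∃ Q : Measure Z, IsProbabilityMeasure Q ∧ τ Q = θ ∧
        x = (Q {w | ρ w θ ≤ ρ z θ}).toReal}) :
    ∀ P : Measure Z, IsProbabilityMeasure P →
      ∀ α : ℝ, α ∈ Set.Icc (0 : ℝ) 1 →
        P {z | π z (τ P) ≤ α} ≤ ENNReal.ofReal α := by
  intro P hP α hα
  haveI := hP
  set θ := τ P with hθ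
  set A : Set Z := {z | π z θ ≤ α} with hA
  have key : ∀ z ∈ A, (P {w | ρ w θ ≤ ρ z θ}).toReal ≤ α := by
    intro z hz
    refine le_trans ?_ hz
    rw [hπ z θ]
    apply le_csSup
    · refine ⟨1, ?_⟩
      rintro x ⟨Q, hQ, -, rfl⟩
      haveI := hQ
      exact ENNReal.toReal_le_of_le_ofReal zero_le_one (by simpa using prob_le_one)
    · exact ⟨P, hP, rfl, rfl⟩
  rcases A.eq_empty_or_nonempty with h | hne
  · simp [← hA, h]
  -- cofinal sequence
  set S : Set ℝ := (fun z => ρ z θ) '' A with hS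
  have hSne : S.Nonempty := hne.image _
  have hcof : ∃ u : ℕ → Z, (∀ n, u n ∈ A) ∧ ∀ z ∈ A, ∃ n, ρ z θ ≤ ρ (u n) θ := by
    by_cases hb : BddAbove S
    · by_cases hm : sSup S ∈ S
      · obtain ⟨z₀, hz₀, hz₀'⟩ := hm
        exact ⟨fun _ => z₀, fun _ => hz₀, fun z hz => ⟨0, by simpa [hz₀'] using le_csSup hb ⟨z, hz, rfl⟩⟩⟩
      · have h1 : ∀ n : ℕ, ∃ z ∈ A, sSup S - 1/(n+1) < ρ z θ := by
          intro n
          have : sSup S - 1/(n+1) < sSup S := by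
            have : (0:ℝ) < 1/(n+1) := by positivity
            linarith
          obtain ⟨s, ⟨z, hz, rfl⟩, hs⟩ := exists_lt_of_lt_csSup hSne this
          exact ⟨z, hz, hs⟩
        choose u hu hu' using h1
        refine ⟨u, hu, fun z hz => ?_⟩
        have hlt : ρ z θ < sSup S :=
          lt_of_le_of_ne (le_csSup hb ⟨z, hz, rfl⟩) (fun h => hm (h ▸ ⟨z, hz, rfl⟩))
        obtain ⟨n, hn⟩ := exists_nat_one_div_lt (sub_pos.mpr hlt)
        exact ⟨n, le_of_lt (lt_trans (by linarith [hn]) (hu' n))⟩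
    · rw [not_bddAbove_iff] at hb
      have h1 : ∀ n : ℕ, ∃ z ∈ A, (n:ℝ) < ρ z θ := by
        intro n
        obtain ⟨s, ⟨z, hz, rfl⟩, hs⟩ := hb n
        exact ⟨z, hz, hs⟩
      choose u hu hu' using h1
      refine ⟨u, hu, fun z hz => ?_⟩
      obtain ⟨n, hn⟩ := exists_nat_ge (ρ z θ)
      exact ⟨n, le_of_lt (lt_of_le_of_lt hn (hu' n))⟩
  obtain ⟨u, huA, hucof⟩ := hcof
  set B : ℕ → Set Z := fun n => {w | ρ w θ ≤ ρ (u n) θ} with hB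
  have hsub : A ⊆ ⋃ n, B n := by
    intro z hz
    obtain ⟨n, hn⟩ := hucof z hz
    exact mem_iUnion.mpr ⟨n, hn⟩
  have hdir : Directed (· ⊆ ·) B := by
    intro m n
    rcases le_total (ρ (u m) θ) (ρ (u n) θ) with h | h
    · exact ⟨n, fun w hw => le_trans hw h, fun w hw => hw⟩
    · exact ⟨m, fun w hw => hw, fun w hw => le_trans hw h⟩
  calc P A ≤ P (⋃ n, B n) := measure_mono hsub
    _ = ⨆ n, P (B n) := hdir.measure_iUnion
    _ ≤ ENNReal.ofReal α := by
        refine iSup_le fun n => ?_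
        exact (ENNReal.le_ofReal_iff_toReal_le (measure_ne_top P _) hα.1).mpr
          (key (u n) (huA n))
end

section
/- For exchangeable real-valued scores S_1, …, S_{n+1} (exchangeable joint distribution), the normalized rank T = (1/(n+1)) Σ_{i=1}^{n+1} 1{S_i ≤ S_{n+1}} satisfies P{T ≤ α} ≤ α for every α ∈ [0,1]. -/
/-!
By exchangeability, the event that coordinate `j` has rank at most `k` has the same probability
for every `j`. In every realization at most `k` coordinates have rank at most `k`, so summing over
`j` gives `(n + 1) · P{rank of S_{n+1} ≤ k} ≤ k`; take `k = ⌊α (n + 1)⌋`.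
-/

open MeasureTheory Set Finset
open scoped ENNReal

namespace Conformal

variable {ι β : Type*} [Fintype ι] [LinearOrder β]

def rank (s : ι → β) (j : ι) : ℕ := #{i | s i ≤ s j}

/-- Among the coordinates of rank at most `k`, the one with the largest score bounds all the
others, so their number is at most its rank. -/
theorem card_rank_le_le (s : ι → β) (k : ℕ) : #{j | rank s j ≤ k} ≤ k := by
  obtain hempty | hne := (univ.filter fun j => rank s j ≤ k).eq_empty_or_nonempty
  · simp [hempty]
  obtain ⟨j, hj, hmax⟩ := exists_max_image _ s hne
  calc #{j | rank s j ≤ k} ≤ rank s j := card_le_card fun i hi => by simpa using hmax i hi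
    _ ≤ k := (mem_filter.mp hj).2

theorem rank_comp_perm (s : ι → β) (σ : Equiv.Perm ι) (j : ι) :
    rank (s ∘ σ) j = rank s (σ j) :=
  card_equiv σ fun i => by simp

variable [MeasurableSpace β] [TopologicalSpace β] [OpensMeasurableSpace β]
  [OrderClosedTopology β] [SecondCountableTopology β]

theorem measurable_rank (j : ι) :
    Measurable fun s : ι → β => rank s j := by
  simp only [rank, card_filter]
  exact Finset.measurable_sum _ fun i _ => Measurable.ite
    (measurableSet_le (measurable_pi_apply i) (measurable_pi_apply j))
    measurable_const measurable_const

variable {Ω : Type*} [MeasurableSpace Ω] {μ : Measure Ω} {X : Ω → ι → β}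

theorem measurableSet_rank_le (hX : Measurable X) (j : ι) (k : ℕ) :
    MeasurableSet {ω | rank (X ω) j ≤ k} :=
  (measurable_rank j).comp hX measurableSet_Iic

theorem sum_measure_rank_le_le (hX : Measurable X) (k : ℕ) :
    ∑ j, μ {ω | rank (X ω) j ≤ k} ≤ k * μ univ := by
  calc ∑ j, μ {ω | rank (X ω) j ≤ k}
      = ∫⁻ ω, ∑ j, {ω | rank (X ω) j ≤ k}.indicator 1 ω ∂μ := by
        rw [lintegral_finsetSum _ fun j _ =>
          measurable_one.indicator (measurableSet_rank_le hX j k)]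
        simp only [lintegral_indicator_one (measurableSet_rank_le hX _ k)]
    _ = ∫⁻ ω, (#{j | rank (X ω) j ≤ k} : ℝ≥0∞) ∂μ := by
        simp only [indicator_apply, mem_ofPred_eq, Pi.one_apply, sum_boole]
    _ ≤ ∫⁻ _, (k : ℝ≥0∞) ∂μ := lintegral_mono fun ω => Nat.cast_le.mpr (card_rank_le_le (X ω) k)
    _ = k * μ univ := lintegral_const _

theorem measure_rank_le_eq (hX : Measurable X)
    (exch : ∀ σ : Equiv.Perm ι, μ.map (fun ω => X ω ∘ σ) = μ.map X) (k : ℕ) (i j : ι) :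
    μ {ω | rank (X ω) i ≤ k} = μ {ω | rank (X ω) j ≤ k} := by
  classical
  have hXσ : Measurable fun ω => X ω ∘ Equiv.swap i j :=
    measurable_pi_iff.mpr fun l => (measurable_pi_apply _).comp hX
  have hA : MeasurableSet {s : ι → β | rank s j ≤ k} := measurable_rank j measurableSet_Iic
  calc μ {ω | rank (X ω) i ≤ k} = μ.map (fun ω => X ω ∘ Equiv.swap i j) {s | rank s j ≤ k} := by
        rw [Measure.map_apply hXσ hA]
        simp [Set.preimage, rank_comp_perm]
    _ = μ {ω | rank (X ω) j ≤ k} := by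
        rw [exch, Measure.map_apply hX hA]
        rfl

theorem card_mul_measure_rank_le_le (hX : Measurable X)
    (exch : ∀ σ : Equiv.Perm ι, μ.map (fun ω => X ω ∘ σ) = μ.map X) (k : ℕ) (j : ι) :
    Fintype.card ι * μ {ω | rank (X ω) j ≤ k} ≤ k * μ univ := by
  calc Fintype.card ι * μ {ω | rank (X ω) j ≤ k} = ∑ i, μ {ω | rank (X ω) i ≤ k} := by
        simp [measure_rank_le_eq hX exch k _ j]
    _ ≤ k * μ univ := sum_measure_rank_le_le hX k

theorem measure_rank_div_card_le_le [IsProbabilityMeasure μ] (hX : Measurable X)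
    (exch : ∀ σ : Equiv.Perm ι, μ.map (fun ω => X ω ∘ σ) = μ.map X) (j : ι)
    {α : ℝ} (hα : 0 ≤ α) :
    μ {ω | (rank (X ω) j : ℝ) / Fintype.card ι ≤ α} ≤ ENNReal.ofReal α := by
  have hcard : (0 : ℝ) < Fintype.card ι := by exact_mod_cast Fintype.card_pos_iff.mpr ⟨j⟩
  set k := ⌊α * Fintype.card ι⌋₊
  have hevent : {ω | (rank (X ω) j : ℝ) / Fintype.card ι ≤ α} = {ω | rank (X ω) j ≤ k} := by
    ext ω
    simp [div_le_iff₀ hcard, k, Nat.le_floor_iff (mul_nonneg hα hcard.le)]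
  have hbound := card_mul_measure_rank_le_le (μ := μ) hX exch k j
  rw [measure_univ, mul_one] at hbound
  rw [hevent]
  calc μ {ω | rank (X ω) j ≤ k} ≤ k / Fintype.card ι := by
        rw [ENNReal.le_div_iff_mul_le (Or.inl (by exact_mod_cast hcard.ne')) (by simp), mul_comm]
        exact hbound
    _ = ENNReal.ofReal (k / Fintype.card ι) := by
        rw [ENNReal.ofReal_div_of_pos hcard]
        simp
    _ ≤ ENNReal.ofReal α :=
        ENNReal.ofReal_le_ofReal ((div_le_iff₀ hcard).mpr (Nat.floor_le (mul_nonneg hα hcard.le)))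

end Conformal

/-- For exchangeable real-valued scores `S_1, …, S_{n+1}`, the normalized rank
`T = (1/(n+1)) Σ_i 1{S_i ≤ S_{n+1}}` satisfies `P{T ≤ α} ≤ α` for `α ∈ [0,1]`. -/
theorem stmt13 {Ω : Type*} [MeasurableSpace Ω] (P : Measure Ω)
    [IsProbabilityMeasure P] (n : ℕ)
    (S : Ω → Fin (n + 1) → ℝ) (hS : Measurable S)
    (exch : ∀ σ : Equiv.Perm (Fin (n + 1)),
      P.map (fun ω => S ω ∘ σ) = P.map S)
    (T : Ω → ℝ)
    (hT : ∀ ω, T ω =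
      ((Finset.univ.filter
          (fun i : Fin (n + 1) => S ω i ≤ S ω (Fin.last n))).card : ℝ) / (n + 1)) :
    ∀ α : ℝ, α ∈ Set.Icc (0 : ℝ) 1 →
      P {ω | T ω ≤ α} ≤ ENNReal.ofReal α := by
  rintro α ⟨hα, -⟩
  have hT_rank : ∀ ω,
      T ω = (Conformal.rank (S ω) (Fin.last n) : ℝ) / Fintype.card (Fin (n + 1)) := by
    simp [hT, Conformal.rank]
  simpa only [hT_rank] using Conformal.measure_rank_div_card_le_le hS exch (Fin.last n) hα
end

section
/- Nested confidence sets yield a strongly valid IM (Proposition, part b): given nested, nonempty confidence sets {C_α(z) : α ∈ [0,1]} for Φ = f(Θ) with sup_θ P_θ{C_α(Z) ∌ f(θ)} ≤ α for all α, the contour π_z(θ) = sup{β : C_β(z) ∋ f(θ)} satisfies: (i) f(θ) ∈ C_α(z) implies π_z(θ) ≥ α; (ii) P_θ{π_Z(θ) < α} ≤ α for all θ and α (strong validity); (iii) sup_θ π_z(θ) = 1. -/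
open MeasureTheory Set

/-- Nested confidence sets yield a strongly valid IM: given nested, nonempty
confidence sets `{C_α(z)}` for `Φ = f(Θ)` with coverage, the contour
`π_z(θ) = sup{β ∈ [0,1] : f(θ) ∈ C_β(z)}` satisfies (i) `f(θ) ∈ C_α(z)` implies
`π_z(θ) ≥ α`; (ii) strong validity `P_θ{π_Z(θ) < α} ≤ α`; (iii) normalization
`sup_θ π_z(θ) = 1`. -/
theorem stmt15 {Z T S : Type*} [MeasurableSpace Z] (P : T → Measure Z)
    [∀ θ, IsProbabilityMeasure (P θ)] (f : T → S) (hf : Function.Surjective f)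
    (C : ℝ → Z → Set S)
    (hnested : ∀ (z : Z) (α α' : ℝ), α < α' → C α' z ⊆ C α z)
    (hnonempty : ∀ z : Z, (⋂ α ∈ Set.Icc (0 : ℝ) 1, C α z).Nonempty)
    (hcover : ∀ α : ℝ, α ∈ Set.Icc (0 : ℝ) 1 → ∀ θ : T,
      P θ {z | f θ ∉ C α z} ≤ ENNReal.ofReal α)
    (π : Z → T → ℝ)
    (hπ : ∀ z θ, π z θ = sSup {β : ℝ | β ∈ Set.Icc (0 : ℝ) 1 ∧ f θ ∈ C β z}) :
    (∀ z : Z, ∀ θ : T, ∀ α : ℝ, α ∈ Set.Icc (0 : ℝ) 1 →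
        f θ ∈ C α z → α ≤ π z θ) ∧
      (∀ θ : T, ∀ α : ℝ, α ∈ Set.Icc (0 : ℝ) 1 →
        P θ {z | π z θ < α} ≤ ENNReal.ofReal α) ∧
      (∀ z : Z, sSup (Set.range (π z)) = 1) := by
  have hle1 : ∀ z θ, π z θ ≤ 1 := by
    intro z θ
    rw [hπ]
    exact Real.sSup_le (fun x hx => hx.1.2) zero_le_one
  have hi : ∀ z : Z, ∀ θ : T, ∀ α : ℝ, α ∈ Set.Icc (0 : ℝ) 1 →
      f θ ∈ C α z → α ≤ π z θ := by
    intro z θ α hα hmem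
    rw [hπ]
    exact le_csSup ⟨1, fun x hx => hx.1.2⟩ ⟨hα, hmem⟩
  refine ⟨hi, ?_, ?_⟩
  · intro θ α hα
    refine le_trans (measure_mono ?_) (hcover α hα θ)
    intro z hz
    simp only [Set.mem_setOf_eq] at *
    intro hmem
    exact absurd (hi z θ α hα hmem) (not_le.mpr hz)
  · intro z
    obtain ⟨s, hs⟩ := hnonempty z
    obtain ⟨θ₀, rfl⟩ := hf s
    simp only [Set.mem_iInter] at hs
    have h1 : π z θ₀ = 1 := by
      refine le_antisymm (hle1 z θ₀) ?_
      exact hi z θ₀ 1 ⟨zero_le_one, le_refl 1⟩ (hs 1 ⟨zero_le_one, le_refl 1⟩)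
    refine le_antisymm (Real.sSup_le ?_ zero_le_one) ?_
    · rintro x ⟨θ, rfl⟩; exact hle1 z θ
    · rw [← h1]
      exact le_csSup ⟨1, by rintro x ⟨θ, rfl⟩; exact hle1 z θ⟩ ⟨θ₀, rfl⟩
end

section
/- Mixture representation gives credal membership: suppose {K^β : β ∈ [0,1]} is a family of probability measures on T with K^β supported on C_β = {θ : π(θ) > β} (i.e., K^β(C_β) = 1) for each β, and M is a probability measure on [0,1] that is stochastically no smaller than Uniform(0,1) (M([0, β]) ≤ β for all β). Then the mixture Q(·) = ∫₀¹ K^β(·) M(dβ) satisfies Q(C_α) ≥ 1 − α for all α ∈ [0,1]; i.e., Q assigns at least 1 − α mass to every α-level set of the contour π. -/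
open MeasureTheory Set ENNReal

namespace MeasureTheory

variable {α : Type*} [MeasurableSpace α]

theorem measure_le_lintegral_of_one_le_on {μ : Measure α} {s : Set α} {f : α → ℝ≥0∞}
    (hs : MeasurableSet s) (hf : ∀ x ∈ s, 1 ≤ f x) : μ s ≤ ∫⁻ x, f x ∂μ := by
  rw [← lintegral_indicator_one hs]
  exact lintegral_mono (indicator_le hf)

theorem one_sub_measure_Iic_le_measure_Icc {μ : Measure ℝ} (h01 : μ (Icc 0 1) = 1) (a : ℝ) :
    1 - μ (Iic a) ≤ μ (Icc a 1) := by
  have hcover : Icc (0 : ℝ) 1 ⊆ Icc a 1 ∪ Iic a := fun x hx =>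
    (le_or_gt a x).imp (fun h => ⟨h, hx.2⟩) le_of_lt
  rw [tsub_le_iff_right, ← h01]
  exact (measure_mono hcover).trans (measure_union_le _ _)

end MeasureTheory

theorem stmt19_general {T : Type*} [MeasurableSpace T] (π : T → ℝ)
    (K : ℝ → Measure T)
    (hKsupp : ∀ β ∈ Set.Icc (0 : ℝ) 1, K β {θ | β < π θ} = 1)
    (M : Measure ℝ) (hM01 : M (Set.Icc (0 : ℝ) 1) = 1)
    (hMdom : ∀ β : ℝ, β ∈ Set.Icc (0 : ℝ) 1 → M (Set.Iic β) ≤ ENNReal.ofReal β)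
    (Q : Set T → ℝ≥0∞) (hQ : ∀ A, Q A = ∫⁻ β, K β A ∂M) :
    ∀ α : ℝ, α ∈ Set.Icc (0 : ℝ) 1 →
      ENNReal.ofReal (1 - α) ≤ Q {θ | α < π θ} := by
  intro α hα
  have hsupp : ∀ β ∈ Icc α 1, 1 ≤ K β {θ | α < π θ} := fun β hβ =>
    calc 1 = K β {θ | β < π θ} := (hKsupp β ⟨hα.1.trans hβ.1, hβ.2⟩).symm
      _ ≤ K β {θ | α < π θ} := measure_mono fun θ hθ => hβ.1.trans_lt hθ
  calc ENNReal.ofReal (1 - α) = 1 - ENNReal.ofReal α := by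
        rw [ENNReal.ofReal_sub 1 hα.1, ENNReal.ofReal_one]
    _ ≤ 1 - M (Iic α) := tsub_le_tsub_left (hMdom α hα) 1
    _ ≤ M (Icc α 1) := one_sub_measure_Iic_le_measure_Icc hM01 α
    _ ≤ Q {θ | α < π θ} := hQ _ ▸ measure_le_lintegral_of_one_le_on measurableSet_Icc hsupp

/-- Mixture representation gives credal membership: if `K^β` is supported on
the level set `C_β = {θ : π(θ) > β}` for each `β ∈ [0,1]`, and `M` on `[0,1]`
is stochastically no smaller than Uniform(0,1), then the mixture
`Q(A) = ∫₀¹ K^β(A) M(dβ)` satisfies `Q(C_α) ≥ 1 − α` for all `α ∈ [0,1]`. -/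
theorem stmt19 {T : Type*} [MeasurableSpace T] (π : T → ℝ) (hπ : Measurable π)
    (K : ℝ → Measure T)
    (hKprob : ∀ β ∈ Set.Icc (0 : ℝ) 1, IsProbabilityMeasure (K β))
    (hKsupp : ∀ β ∈ Set.Icc (0 : ℝ) 1, K β {θ | β < π θ} = 1)
    (M : Measure ℝ) [IsProbabilityMeasure M] (hM01 : M (Set.Icc (0 : ℝ) 1) = 1)
    (hMdom : ∀ β : ℝ, β ∈ Set.Icc (0 : ℝ) 1 → M (Set.Iic β) ≤ ENNReal.ofReal β)
    (Q : Set T → ℝ≥0∞) (hQ : ∀ A, Q A = ∫⁻ β, K β A ∂M) :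
    ∀ α : ℝ, α ∈ Set.Icc (0 : ℝ) 1 →
      ENNReal.ofReal (1 - α) ≤ Q {θ | α < π θ} :=
  stmt19_general π K hKsupp M hM01 hMdom Q hQ
end
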